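/- arXiv:1104.0067 — 2 statements merged into one kernel-verified Lean document; each statement's English description precedes it below -/
import Mathlib

section
/- Let K be a field of characteristic not 2, V a K-vector space of dimension 5, Q a quadratic form on V, and e : Basis (Fin 5) K V an orthogonal basis for Q (i.e. the polar form of Q vanishes on distinct basis vectors). Let ω denote the pseudoscalar, the ordered product ι Q (e 0) * ι Q (e 1) * ι Q (e 2) * ι Q (e 3) * ι Q (e 4). Then for every element x of the Clifford algebra of Q there exist s, t, u, d : K such that, setting ξ := x * reverse x and η := ξ * (algebraMap s + t • ω - ξ), one has η * (algebraMap u - η) = algebraMap d. (This is the paper's five-dimensional determinant formula Det(A) = A⟦A⟧₂₃⟦A⟦A⟧₂₃⟧₁₄⟦A⟦A⟧₂₃⟦A⟦A⟧₂₃⟧₁₄⟧₅: ξ has only grades {0,1,4,5}, so ⟦ξ⟧₁₄ = algebraMap s + t•ω − ξ with s and t twice its grade-0 and grade-5 coefficients; η has only grades {0,5}, so ⟦η⟧₅ = algebraMap u − η with u twice its grade-0 coefficient; the scalars s, t, u are existentially quantified.) -/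
/-!
Expand in the monomials `e i₁ ⋯ e iₖ` (`i₁ < ⋯ < iₖ`) of the orthogonal basis and write `ω`
for the pseudoscalar. Reversal multiplies a monomial of length `k` by `(-1) ^ (k choose 2)`, so the
reversal-invariant element `ξ = x * reverse x` has no component of grade 2 or 3:
`ξ = A + v` with `A = s + t ω` and `v` of grades 1 and 4. In odd dimension `ω` is central and
`ω²` is a scalar, so `⟦ξ⟧₁₄ = 2s + 2t ω - ξ = A - v` and `η = ξ (A - v) = A² - v²`.
Anticommutators of monomials of grades 1 and 4 lie in `span {1, ω}`: two distinct monomials of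
grade 4 share three indices and anticommute, and a vector either anticommutes with a monomial of
grade 4 or completes it to `± ω`. Hence `v²`, and with it `η = α + β ω`, lies in
`span {1, ω}`, and `η (2α - η) = (α + β ω) (α - β ω) = α² - β² ω²` is a scalar.
-/

open CliffordAlgebra

namespace Submodule

variable {R A : Type*} [CommRing R] [Ring A] [Algebra R A] {ω : A} {c : R}

lemma mul_mem_span_one_of_mul_self_eq (hω : ω * ω = algebraMap R A c) {x y : A}
    (hx : x ∈ span R {1, ω}) (hy : y ∈ span R {1, ω}) : x * y ∈ span R {1, ω} := by
  have hone : (1 : A) ∈ span R {1, ω} := subset_span (Set.mem_insert _ _)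
  have hω_mem : ω ∈ span R {1, ω} := subset_span (Set.mem_insert_of_mem _ rfl)
  have hmul : span R {1, ω} * span R {1, ω} ≤ span R {1, ω} := by
    rw [span_mul_span, span_le]
    rintro _ ⟨a, ha, b, hb, rfl⟩
    simp only [Set.mem_insert_iff, Set.mem_singleton_iff] at ha hb
    dsimp only
    rcases ha with rfl | rfl <;> rcases hb with rfl | rfl
    · rwa [one_mul]
    · rwa [one_mul]
    · rwa [mul_one]
    · rw [SetLike.mem_coe, hω, Algebra.algebraMap_eq_smul_one]
      exact smul_mem _ _ hone
  exact hmul (mul_mem_mul hx hy)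

lemma exists_mul_algebraMap_sub_eq_algebraMap (hω : ω * ω = algebraMap R A c) {x : A}
    (hx : x ∈ span R {1, ω}) : ∃ u d : R, x * (algebraMap R A u - x) = algebraMap R A d := by
  obtain ⟨α, β, rfl⟩ := mem_span_pair.mp hx
  refine ⟨2 * α, α * α - β * β * c, ?_⟩
  have hconj : algebraMap R A (2 * α) - (α • 1 + β • ω) = α • 1 - β • ω := by
    rw [Algebra.algebraMap_eq_smul_one]; module
  rw [hconj]
  simp only [add_mul, mul_sub, smul_mul_smul_comm, one_mul, mul_one, hω,
    Algebra.algebraMap_eq_smul_one, smul_smul]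
  module

end Submodule

lemma Finset.card_inter_add_two {α : Type*} [Fintype α] [DecidableEq α] {s t : Finset α}
    (hs : s.card + 1 = Fintype.card α) (ht : t.card + 1 = Fintype.card α) (hst : s ≠ t) :
    (s ∩ t).card + 2 = Fintype.card α := by
  have hunion := Finset.card_union_add_card_inter s t
  have hle := (s ∪ t).card_le_univ
  have hlt : (s ∩ t).card < s.card := by
    refine Finset.card_lt_card (Finset.ssubset_iff_subset_ne.mpr ⟨Finset.inter_subset_left, ?_⟩)
    intro h
    exact hst (Finset.eq_of_subset_of_card_le (Finset.inter_eq_left.mp h) (by omega))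
  omega

lemma List.sum_map_count_eq_card_inter {α : Type*} [DecidableEq α] {l m : List α}
    (hl : l.Nodup) (hm : m.Nodup) : (l.map m.count).sum = (l.toFinset ∩ m.toFinset).card := by
  rw [← List.sum_toFinset _ hl, ← Finset.filter_mem_eq_inter, Finset.card_filter]
  refine Finset.sum_congr rfl fun a _ => ?_
  by_cases ha : a ∈ m
  · simp [List.count_eq_one_of_mem hm ha, ha]
  · simp [List.count_eq_zero_of_not_mem ha, ha]

namespace CliffordAlgebra

variable {R M κ : Type*} [CommRing R] [AddCommGroup M] [Module R M]

def monomial (Q : QuadraticForm R M) (e : κ → M) (l : List κ) : CliffordAlgebra Q :=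
  (l.map fun i => ι Q (e i)).prod

variable {Q : QuadraticForm R M} {e : κ → M}

@[simp] lemma monomial_nil : monomial Q e [] = 1 := rfl

@[simp] lemma monomial_cons (i : κ) (l : List κ) :
    monomial Q e (i :: l) = ι Q (e i) * monomial Q e l := List.prod_cons

section Orthogonal

variable [DecidableEq κ] (horth : Pairwise fun i j => Q.IsOrtho (e i) (e j))
include horth

lemma monomial_mul_ι (l : List κ) (i : κ) :
    monomial Q e l * ι Q (e i) =
      (-1 : R) ^ (l.length + l.count i) • (ι Q (e i) * monomial Q e l) := by
  induction l with
  | nil => simp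
  | cons j t ih =>
    rw [monomial_cons, mul_assoc, ih, mul_smul_comm, List.count_cons, List.length_cons]
    obtain rfl | hij := eq_or_ne j i
    · rw [beq_self_eq_true, if_pos rfl, ← mul_assoc,
        show t.length + 1 + (t.count j + 1) = t.length + t.count j + 2 by ring, pow_add _ _ 2,
        neg_one_sq, mul_one]
    · rw [beq_false_of_ne hij, if_neg Bool.false_ne_true, add_zero, Nat.add_right_comm, pow_succ,
        mul_neg_one, neg_smul, ι_mul_ι_mul_of_isOrtho _ (horth hij), smul_neg]

lemma ι_mul_monomial (l : List κ) (i : κ) :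
    ι Q (e i) * monomial Q e l =
      (-1 : R) ^ (l.length + l.count i) • (monomial Q e l * ι Q (e i)) := by
  rw [monomial_mul_ι horth, smul_smul, ← pow_add, ← two_mul, pow_mul, neg_one_sq, one_pow,
    one_smul]

lemma monomial_mul_monomial (l m : List κ) :
    monomial Q e l * monomial Q e m =
      (-1 : R) ^ (l.length * m.length + (l.map m.count).sum) •
        (monomial Q e m * monomial Q e l) := by
  induction l with
  | nil => simp
  | cons i t ih =>
    rw [monomial_cons, mul_assoc, ih, mul_smul_comm, ← mul_assoc, ι_mul_monomial horth,
      smul_mul_assoc, smul_smul, ← pow_add, mul_assoc, ← monomial_cons]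
    congr 2
    simp only [List.length_cons, List.map_cons, List.sum_cons]
    ring

lemma reverse_monomial {l : List κ} (hl : l.Nodup) :
    reverse (monomial Q e l) = (-1 : R) ^ l.length.choose 2 • monomial Q e l := by
  induction l with
  | nil => simp
  | cons i t ih =>
    rw [List.nodup_cons] at hl
    rw [monomial_cons, reverse.map_mul, reverse_ι, ih hl.2, smul_mul_assoc, monomial_mul_ι horth,
      List.count_eq_zero_of_not_mem hl.1, smul_smul, ← pow_add, List.length_cons,
      Nat.choose_succ_succ, Nat.choose_one_right, add_zero, add_comm]

lemma exists_monomial_mul_self (l : List κ) :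
    ∃ c : R, monomial Q e l * monomial Q e l = algebraMap R _ c := by
  induction l with
  | nil => exact ⟨1, by simp⟩
  | cons i t ih =>
    obtain ⟨c, hc⟩ := ih
    refine ⟨(-1) ^ (t.length + t.count i) * Q (e i) * c, ?_⟩
    rw [monomial_cons, mul_assoc, ← mul_assoc (monomial Q e t), monomial_mul_ι horth,
      smul_mul_assoc, mul_smul_comm, ← mul_assoc, ← mul_assoc, ι_sq_scalar, mul_assoc, hc]
    simp only [map_mul, Algebra.smul_def, map_pow, map_neg, map_one, mul_assoc]

end Orthogonal

section Sorted

variable [LinearOrder κ]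

variable (Q e) in
/-- The span of the increasing monomials of length in `S`; for an orthogonal basis `e` this is
the part of grades `S`. -/
def monomialSpan (S : Set ℕ) : Submodule R (CliffordAlgebra Q) :=
  Submodule.span R
    {x | ∃ l : List κ, l.Pairwise (· < ·) ∧ l.length ∈ S ∧ x = monomial Q e l}

lemma monomial_mem_monomialSpan {S : Set ℕ} {l : List κ} (hl : l.Pairwise (· < ·))
    (hS : l.length ∈ S) : monomial Q e l ∈ monomialSpan Q e S :=
  Submodule.subset_span ⟨l, hl, hS, rfl⟩

lemma monomialSpan_union (S T : Set ℕ) :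
    monomialSpan Q e (S ∪ T) = monomialSpan Q e S ⊔ monomialSpan Q e T := by
  rw [monomialSpan, monomialSpan, monomialSpan, ← Submodule.span_union]
  congr 1
  ext x
  simp only [Set.mem_union, Set.mem_ofPred_eq, and_or_left, or_and_right, exists_or]

lemma monomialSpan_singleton_zero : monomialSpan Q e {0} = Submodule.span R {1} := by
  rw [monomialSpan]
  congr 1
  ext x
  simp [List.length_eq_zero_iff]

variable (horth : Pairwise fun i j => Q.IsOrtho (e i) (e j))
include horth

lemma exists_ι_mul_monomial_eq_smul {l : List κ} (hl : l.Pairwise (· < ·)) (i : κ) :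
    ∃ (c : R) (l' : List κ), l'.Pairwise (· < ·) ∧ l' ⊆ i :: l ∧
      (i ∉ l → l'.length = l.length + 1) ∧
      ι Q (e i) * monomial Q e l = c • monomial Q e l' := by
  induction l with
  | nil => exact ⟨1, [i], List.pairwise_singleton _ i, by simp, by simp, by simp⟩
  | cons j t ih =>
    rw [List.pairwise_cons] at hl
    rcases lt_trichotomy i j with hij | rfl | hij
    · refine ⟨1, i :: j :: t, ?_, by simp, by simp, by simp⟩
      exact List.pairwise_cons.mpr ⟨by simpa [hij] using fun k hk => hij.trans (hl.1 k hk),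
        List.pairwise_cons.mpr hl⟩
    · refine ⟨Q (e i), t, hl.2, by simp, by simp, ?_⟩
      rw [monomial_cons, ← mul_assoc, ι_sq_scalar, Algebra.smul_def]
    · obtain ⟨c, l', hl', hsub, hlen, hmul⟩ := ih hl.2
      refine ⟨-c, j :: l', List.pairwise_cons.mpr ⟨fun k hk => ?_, hl'⟩, ?_, ?_, ?_⟩
      · rcases List.mem_cons.mp (hsub hk) with rfl | hk
        exacts [hij, hl.1 k hk]
      · intro k hk
        rcases List.mem_cons.mp hk with rfl | hk
        · simp
        · rcases List.mem_cons.mp (hsub hk) with rfl | hk <;> simp [*]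
      · intro hi
        simp [hlen (fun h => hi (List.mem_cons_of_mem _ h))]
      · rw [monomial_cons, ι_mul_ι_mul_of_isOrtho _ (horth hij.ne'), hmul, mul_smul_comm,
          ← monomial_cons, neg_smul]

lemma monomialSpan_univ (he : Submodule.span R (Set.range e) = ⊤) :
    monomialSpan Q e Set.univ = ⊤ := by
  set N := monomialSpan Q e Set.univ
  have hgen (i : κ) {x} (hx : x ∈ N) : ι Q (e i) * x ∈ N := by
    induction hx using Submodule.span_induction with
    | mem x hx =>
      obtain ⟨l, hl, -, rfl⟩ := hx
      obtain ⟨c, l', hl', -, -, hmul⟩ := exists_ι_mul_monomial_eq_smul horth hl i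
      rw [hmul]
      exact N.smul_mem c (monomial_mem_monomialSpan hl' trivial)
    | zero => simp
    | add x y _ _ hx hy => rw [mul_add]; exact N.add_mem hx hy
    | smul c x _ hx => rw [mul_smul_comm]; exact N.smul_mem c hx
  have hvec (v : M) {x} (hx : x ∈ N) : ι Q v * x ∈ N := by
    have hv : v ∈ Submodule.span R (Set.range e) := he ▸ Submodule.mem_top
    induction hv using Submodule.span_induction with
    | mem v hv => obtain ⟨i, rfl⟩ := hv; exact hgen i hx
    | zero => simp
    | add v w _ _ hv hw => rw [map_add, add_mul]; exact N.add_mem hv hw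
    | smul c v _ hv => rw [map_smul, smul_mul_assoc]; exact N.smul_mem c hv
  refine Submodule.eq_top_iff'.mpr fun x => ?_
  induction x using CliffordAlgebra.left_induction with
  | algebraMap r =>
    rw [Algebra.algebraMap_eq_smul_one]
    exact N.smul_mem r (monomial_mem_monomialSpan (l := []) List.Pairwise.nil trivial)
  | add x y hx hy => exact N.add_mem hx hy
  | ι_mul x v hx => exact hvec v hx

lemma reverse_eq_smul_of_mem_monomialSpan {S : Set ℕ} {ε : R}
    (hS : ∀ n ∈ S, (-1 : R) ^ n.choose 2 = ε) {x : CliffordAlgebra Q}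
    (hx : x ∈ monomialSpan Q e S) : reverse x = ε • x := by
  induction hx using Submodule.span_induction with
  | mem x hx =>
    obtain ⟨l, hl, hlS, rfl⟩ := hx
    rw [reverse_monomial horth hl.nodup, hS _ hlS]
  | zero => simp
  | add x y _ _ hx hy => rw [map_add, hx, hy, smul_add]
  | smul c x _ hx => rw [map_smul, hx, smul_comm]

end Sorted

section Finite

variable {n : ℕ} {e : Fin n → M}

lemma eq_finRange_of_pairwise_lt {l : List (Fin n)} (hl : l.Pairwise (· < ·))
    (hlen : l.length = n) : l = List.finRange n := by
  have huniv : l.toFinset = Finset.univ :=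
    Finset.eq_univ_of_card _ (by rw [List.toFinset_card_of_nodup hl.nodup, hlen, Fintype.card_fin])
  exact hl.eq_of_mem_iff (List.pairwise_lt_finRange n) fun a => by
    simp [← List.mem_toFinset, huniv]

lemma monomialSpan_inter_Iic (S : Set ℕ) :
    monomialSpan Q e (S ∩ Set.Iic n) = monomialSpan Q e S := by
  refine le_antisymm (Submodule.span_mono fun x ⟨l, hl, hS, hx⟩ => ⟨l, hl, hS.1, hx⟩) ?_
  refine Submodule.span_le.mpr fun x ⟨l, hl, hS, hx⟩ =>
    Submodule.subset_span ⟨l, hl, ⟨hS, ?_⟩, hx⟩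
  simpa using hl.nodup.length_le_card

lemma monomialSpan_singleton_eq_span_finRange :
    monomialSpan Q e {n} = Submodule.span R {monomial Q e (List.finRange n)} := by
  rw [monomialSpan]
  congr 1
  ext x
  constructor
  · rintro ⟨l, hl, hlen, rfl⟩
    rw [eq_finRange_of_pairwise_lt hl hlen]
    rfl
  · rintro rfl
    exact ⟨_, List.pairwise_lt_finRange n, by simp, rfl⟩

variable (horth : Pairwise fun i j => Q.IsOrtho (e i) (e j))
include horth

lemma commute_monomial_finRange_ι (hn : Odd n) (i : Fin n) :
    Commute (monomial Q e (List.finRange n)) (ι Q (e i)) := by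
  rw [Commute, SemiconjBy, monomial_mul_ι horth, List.length_finRange, List.count_finRange,
    hn.add_one.neg_one_pow, one_smul]

lemma commute_monomial_finRange (hn : Odd n) (he : Submodule.span R (Set.range e) = ⊤)
    (x : CliffordAlgebra Q) : Commute (monomial Q e (List.finRange n)) x := by
  have hx : x ∈ monomialSpan Q e Set.univ := monomialSpan_univ horth he ▸ Submodule.mem_top
  induction hx using Submodule.span_induction with
  | mem x hx =>
    obtain ⟨l, -, -, rfl⟩ := hx
    exact Commute.list_prod_right _ _ fun y hy => by
      obtain ⟨i, -, rfl⟩ := List.mem_map.mp hy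
      exact commute_monomial_finRange_ι horth hn i
  | zero => exact Commute.zero_right _
  | add x y _ _ hx hy => exact hx.add_right hy
  | smul c x _ hx => exact hx.smul_right c

lemma ι_mul_add_mul_ι_mem_span (hn : Odd n) (i : Fin n) {l : List (Fin n)}
    (hl : l.Pairwise (· < ·)) (hlen : l.length = n - 1) :
    ι Q (e i) * monomial Q e l + monomial Q e l * ι Q (e i) ∈
      Submodule.span R {1, monomial Q e (List.finRange n)} := by
  have hn1 : n - 1 + 1 = n := Nat.sub_add_cancel hn.pos
  have heven : Even (n - 1) := by
    obtain ⟨k, rfl⟩ := hn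
    exact ⟨k, by omega⟩
  by_cases hi : i ∈ l
  · rw [monomial_mul_ι horth, hlen, List.count_eq_one_of_mem hl.nodup hi, hn1,
      hn.neg_one_pow, neg_one_smul, add_neg_cancel]
    exact Submodule.zero_mem _
  · obtain ⟨c, l', hl', -, hlen', hmul⟩ := exists_ι_mul_monomial_eq_smul horth hl i
    rw [eq_finRange_of_pairwise_lt hl' (by rw [hlen' hi, hlen, hn1])] at hmul
    rw [monomial_mul_ι horth, hlen, List.count_eq_zero_of_not_mem hi, add_zero,
      heven.neg_one_pow, one_smul, hmul, ← two_smul R, smul_smul]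
    exact Submodule.smul_mem _ _ (Submodule.subset_span (Set.mem_insert_of_mem _ rfl))

lemma monomial_mul_add_mul_eq_zero (hn : Odd n) {l m : List (Fin n)}
    (hl : l.Pairwise (· < ·)) (hm : m.Pairwise (· < ·)) (hlen : l.length = n - 1)
    (hmlen : m.length = n - 1) (hne : l ≠ m) :
    monomial Q e l * monomial Q e m + monomial Q e m * monomial Q e l = 0 := by
  have hpos := hn.pos
  have hcard := Finset.card_inter_add_two
    (by rw [List.toFinset_card_of_nodup hl.nodup, hlen, Fintype.card_fin]; omega)
    (by rw [List.toFinset_card_of_nodup hm.nodup, hmlen, Fintype.card_fin]; omega)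
    fun h => hne <| hl.eq_of_mem_iff hm fun a => by
      rw [← List.mem_toFinset, h, List.mem_toFinset]
  rw [Fintype.card_fin] at hcard
  -- `l` and `m` share `n - 2` indices, and `(n - 1) * (n - 1) + (n - 2)` is odd.
  have hodd : Odd (l.length * m.length + (l.map m.count).sum) := by
    obtain ⟨k, rfl⟩ := hn
    rw [hlen, hmlen, List.sum_map_count_eq_card_inter hl.nodup hm.nodup]
    exact (Even.mul_left ⟨k, by omega⟩ _).add_odd ⟨k - 1, by omega⟩
  rw [monomial_mul_monomial horth, hodd.neg_one_pow, neg_one_smul, neg_add_cancel]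

lemma mul_add_mul_mem_span_of_mem_monomialSpan (hn : Odd n) {x y : CliffordAlgebra Q}
    (hx : x ∈ monomialSpan Q e {1, n - 1}) (hy : y ∈ monomialSpan Q e {1, n - 1}) :
    x * y + y * x ∈ Submodule.span R {1, monomial Q e (List.finRange n)} := by
  set Z := Submodule.span R {1, monomial Q e (List.finRange n)}
  let B := LinearMap.mul R (CliffordAlgebra Q) + (LinearMap.mul R (CliffordAlgebra Q)).flip
  suffices Submodule.map₂ B (monomialSpan Q e {1, n - 1}) (monomialSpan Q e {1, n - 1}) ≤ Z from
    this (Submodule.apply_mem_map₂ B hx hy)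
  rw [monomialSpan, Submodule.map₂_span_span, Submodule.span_le]
  rintro _ ⟨_, ⟨l, hl, hlen, rfl⟩, _, ⟨m, hm, hmlen, rfl⟩, rfl⟩
  simp only [B, LinearMap.add_apply, LinearMap.mul_apply', LinearMap.flip_apply, SetLike.mem_coe]
  rcases hlen with hlen | hlen <;> rcases hmlen with hmlen | hmlen
  · obtain ⟨i, rfl⟩ := List.length_eq_one_iff.mp hlen
    obtain ⟨j, rfl⟩ := List.length_eq_one_iff.mp hmlen
    simp only [monomial_cons, monomial_nil, mul_one]
    rw [ι_mul_ι_add_swap, Algebra.algebraMap_eq_smul_one]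
    exact Z.smul_mem _ (Submodule.subset_span (Set.mem_insert _ _))
  · obtain ⟨i, rfl⟩ := List.length_eq_one_iff.mp hlen
    simpa using ι_mul_add_mul_ι_mem_span horth hn i hm hmlen
  · obtain ⟨j, rfl⟩ := List.length_eq_one_iff.mp hmlen
    simpa [add_comm] using ι_mul_add_mul_ι_mem_span horth hn j hl hlen
  · obtain rfl | hne := eq_or_ne l m
    · obtain ⟨c, hc⟩ := exists_monomial_mul_self horth l
      rw [hc, ← map_add, Algebra.algebraMap_eq_smul_one]
      exact Z.smul_mem _ (Submodule.subset_span (Set.mem_insert _ _))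
    · rw [monomial_mul_add_mul_eq_zero horth hn hl hm hlen hmlen hne]
      exact Z.zero_mem

end Finite

section DimensionFive

variable {K V : Type*} [Field K] [AddCommGroup V] [Module K V] {Q : QuadraticForm K V}
  {e : Fin 5 → V}

lemma exists_eq_algebraMap_add_smul_add_of_reverse_eq (h2 : (2 : K) ≠ 0)
    (horth : Pairwise fun i j => Q.IsOrtho (e i) (e j))
    (he : Submodule.span K (Set.range e) = ⊤) {x : CliffordAlgebra Q} (hx : reverse x = x) :
    ∃ (s t : K) (v : CliffordAlgebra Q), v ∈ monomialSpan Q e {1, 4} ∧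
      x = algebraMap K _ s + t • monomial Q e (List.finRange 5) + v := by
  have hsplit : ({0} ∪ {5} ∪ {1, 4}) ∪ {2, 3} = (Set.univ ∩ Set.Iic 5 : Set ℕ) := by
    ext k
    simp only [Set.mem_union, Set.mem_insert_iff, Set.mem_singleton_iff, Set.mem_inter_iff,
      Set.mem_univ, Set.mem_Iic, true_and]
    omega
  have hx' : x ∈ monomialSpan Q e ({0} ∪ {5} ∪ {1, 4}) ⊔ monomialSpan Q e {2, 3} := by
    rw [← monomialSpan_union, hsplit, monomialSpan_inter_Iic, monomialSpan_univ horth he]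
    exact Submodule.mem_top
  obtain ⟨a, ha, b, hb, rfl⟩ := Submodule.mem_sup.mp hx'
  have hb0 : b = 0 := by
    rw [map_add, reverse_eq_smul_of_mem_monomialSpan horth (ε := 1) ?_ ha,
      reverse_eq_smul_of_mem_monomialSpan horth (ε := -1) ?_ hb, one_smul, neg_one_smul,
      add_right_inj, neg_eq_iff_add_eq_zero, ← two_smul K, smul_eq_zero] at hx
    · exact hx.resolve_left h2
    · rintro k (rfl | rfl) <;> norm_num [Nat.choose]
    · rintro k ((rfl | rfl) | rfl | rfl) <;> norm_num [Nat.choose]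
  rw [monomialSpan_union, monomialSpan_union, monomialSpan_singleton_zero,
    monomialSpan_singleton_eq_span_finRange] at ha
  obtain ⟨a', ha', v, hv, rfl⟩ := Submodule.mem_sup.mp ha
  obtain ⟨a0, ha0, a5, ha5, rfl⟩ := Submodule.mem_sup.mp ha'
  obtain ⟨s, rfl⟩ := Submodule.mem_span_singleton.mp ha0
  obtain ⟨t, rfl⟩ := Submodule.mem_span_singleton.mp ha5
  exact ⟨s, t, v, hv, by rw [hb0, add_zero, Algebra.algebraMap_eq_smul_one]⟩

end DimensionFive

end CliffordAlgebra

theorem det_dim_five_general (K V : Type*) [Field K] [AddCommGroup V] [Module K V]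
    (h2 : (2 : K) ≠ 0)
    (Q : QuadraticForm K V) (e : Module.Basis (Fin 5) K V)
    (horth : ∀ i j : Fin 5, i ≠ j → QuadraticMap.polar Q (e i) (e j) = 0)
    (x : CliffordAlgebra Q) :
    ∃ s t u d : K,
      (x * reverse x *
            (algebraMap K (CliffordAlgebra Q) s +
              t • (ι Q (e 0) * ι Q (e 1) * ι Q (e 2) * ι Q (e 3) * ι Q (e 4)) -
              x * reverse x)) *
          (algebraMap K (CliffordAlgebra Q) u -
            x * reverse x *
              (algebraMap K (CliffordAlgebra Q) s +
                t • (ι Q (e 0) * ι Q (e 1) * ι Q (e 2) * ι Q (e 3) * ι Q (e 4)) -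
                x * reverse x)) =
        algebraMap K (CliffordAlgebra Q) d := by
  have hortho : Pairwise fun i j => Q.IsOrtho (e i) (e j) := fun i j hij =>
    QuadraticMap.isOrtho_polarBilin.mp (horth i j hij)
  have hω : ι Q (e 0) * ι Q (e 1) * ι Q (e 2) * ι Q (e 3) * ι Q (e 4) =
      monomial Q e (List.finRange 5) := by
    simp [monomial, List.finRange_succ, mul_assoc]
  rw [hω]
  set ω := monomial Q e (List.finRange 5)
  obtain ⟨c, hc⟩ := exists_monomial_mul_self hortho (List.finRange 5)
  obtain ⟨s, t, v, hv, hξ⟩ := exists_eq_algebraMap_add_smul_add_of_reverse_eq h2 hortho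
    e.span_eq (x := x * reverse x) (by rw [reverse.map_mul, reverse_reverse])
  set A := algebraMap K (CliffordAlgebra Q) s + t • ω
  have hAv : Commute A v := (Algebra.commute_algebraMap_left s v).add_left
    ((commute_monomial_finRange hortho (by decide) e.span_eq v).smul_left t)
  have hA : A ∈ Submodule.span K {1, ω} :=
    Submodule.mem_span_pair.mpr ⟨s, t, by simp only [A, Algebra.algebraMap_eq_smul_one]⟩
  have hv2 : v * v ∈ Submodule.span K {1, ω} := (Submodule.smul_mem_iff _ h2).mp <| by
    rw [two_smul]
    exact mul_add_mul_mem_span_of_mem_monomialSpan hortho (by decide) hv hv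
  have hη : x * reverse x * (algebraMap K _ (2 * s) + (2 * t) • ω - x * reverse x) =
      A * A - v * v := by
    rw [hξ, hAv.mul_self_sub_mul_self_eq]
    congr 1
    simp only [A, Algebra.algebraMap_eq_smul_one]
    module
  obtain ⟨u, d, h⟩ := Submodule.exists_mul_algebraMap_sub_eq_algebraMap hc
    (hη ▸ sub_mem (Submodule.mul_mem_span_one_of_mul_self_eq hc hA hA) hv2)
  exact ⟨2 * s, 2 * t, u, d, h⟩

/-- In dimension 5 (char K ≠ 2), with an orthogonal basis `e` and pseudoscalar
`ω = ι(e 0) ⋯ ι(e 4)`, the paper's five-dimensional determinant formula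
`Det(A) = A ⟦A⟧₂₃ ⟦A ⟦A⟧₂₃⟧₁₄ ⟦A ⟦A⟧₂₃ ⟦A ⟦A⟧₂₃⟧₁₄⟧₅`: with
`ξ = x * reverse x` (grades {0,1,4,5}) one has
`⟦ξ⟧₁₄ = algebraMap s + t • ω - ξ` for some `s t : K`; then
`η = ξ * ⟦ξ⟧₁₄` has grades {0,5}, `⟦η⟧₅ = algebraMap u - η` for some `u`,
and `η * ⟦η⟧₅` is a scalar `d`. -/
theorem det_dim_five (K V : Type*) [Field K] [AddCommGroup V] [Module K V]
    [FiniteDimensional K V] (h2 : (2 : K) ≠ 0)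
    (hdim : Module.finrank K V = 5)
    (Q : QuadraticForm K V) (e : Module.Basis (Fin 5) K V)
    (horth : ∀ i j : Fin 5, i ≠ j → QuadraticMap.polar Q (e i) (e j) = 0)
    (x : CliffordAlgebra Q) :
    ∃ s t u d : K,
      (x * reverse x *
            (algebraMap K (CliffordAlgebra Q) s +
              t • (ι Q (e 0) * ι Q (e 1) * ι Q (e 2) * ι Q (e 3) * ι Q (e 4)) -
              x * reverse x)) *
          (algebraMap K (CliffordAlgebra Q) u -
            x * reverse x *
              (algebraMap K (CliffordAlgebra Q) s +
                t • (ι Q (e 0) * ι Q (e 1) * ι Q (e 2) * ι Q (e 3) * ι Q (e 4)) -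
                x * reverse x)) =
        algebraMap K (CliffordAlgebra Q) d :=
  det_dim_five_general K V h2 Q e horth x
end

section
/- Let R be a commutative ring, M an R-module, Q a quadratic form on M, and v : Fin n → M a family of vectors that are pairwise orthogonal for Q (the polar form of Q vanishes on v i and v j whenever i ≠ j). Then the ordered product x := ι Q (v 0) * ι Q (v 1) * ⋯ * ι Q (v (n-1)) in the Clifford algebra of Q satisfies x * x = algebraMap ((-1)^(n*(n-1)/2) * ∏ i, Q (v i)). (This generalizes the paper's formula for the square of the unit pseudoscalar, I² = e₁…d e₁…d = (−1)^{d(d−1)/2} g₁₁g₂₂⋯g_dd, and establishes the claim, used in the scalar-plus-blade determinant theorem, that a blade squares to a scalar.) -/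
/-! Squaring `ι u * T`, where `T` is the product of the remaining factors, the second `ι u`
anticommutes past the `k` factors of `T` at the cost of `(-1)^k` and meets the first one to give
the scalar `Q u`; induction then collects the signs `(-1)^(0 + 1 + ⋯ + (n-1))`. -/

open CliffordAlgebra

theorem List.prod_mul_of_forall_anticomm {A : Type*} [Ring A] (a : A) (l : List A)
    (h : ∀ b ∈ l, a * b = -(b * a)) : l.prod * a = (-1) ^ l.length * (a * l.prod) := by
  induction l with
  | nil => simp
  | cons b t ih =>
    rw [List.forall_mem_cons] at h
    have hsign : Commute ((-1 : A) ^ t.length) b := (Commute.neg_one_left b).pow_left _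
    calc b * t.prod * a = b * ((-1) ^ t.length * (a * t.prod)) := by rw [mul_assoc, ih h.2]
      _ = (-1) ^ t.length * (b * a * t.prod) := by
        rw [← mul_assoc, ← hsign.eq, mul_assoc, mul_assoc]
      _ = (-1) ^ (t.length + 1) * (a * (b * t.prod)) := by
        rw [← mul_assoc a, h.1, pow_succ, mul_neg_one, neg_mul, neg_mul, mul_neg, neg_neg]

namespace CliffordAlgebra

variable {R M : Type*} [CommRing R] [AddCommGroup M] [Module R M] {Q : QuadraticForm R M}

theorem ι_mul_ι_comm_of_polar_eq_zero {u w : M} (h : QuadraticMap.polar Q u w = 0) :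
    ι Q u * ι Q w = -(ι Q w * ι Q u) :=
  ι_mul_ι_comm_of_isOrtho (Q.isOrtho_polarBilin.mp h)

theorem prod_map_ι_mul_self (l : List M)
    (hl : l.Pairwise fun u w => QuadraticMap.polar Q u w = 0) :
    (l.map (ι Q)).prod * (l.map (ι Q)).prod =
      algebraMap R _ ((-1) ^ (l.length * (l.length - 1) / 2) * (l.map Q).prod) := by
  induction l with
  | nil => simp
  | cons u t ih =>
    rw [List.pairwise_cons] at hl
    set T := (t.map (ι Q)).prod
    have hmove : T * ι Q u = algebraMap R _ ((-1) ^ t.length) * (ι Q u * T) := by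
      have hanti : ∀ b ∈ t.map (ι Q), ι Q u * b = -(b * ι Q u) := by
        simp only [List.mem_map]
        rintro _ ⟨w, hw, rfl⟩
        exact ι_mul_ι_comm_of_polar_eq_zero (hl.1 w hw)
      simpa using List.prod_mul_of_forall_anticomm (ι Q u) _ hanti
    calc ι Q u * T * (ι Q u * T) = ι Q u * (T * ι Q u) * T := by simp only [mul_assoc]
      _ = algebraMap R _ ((-1) ^ t.length) * (ι Q u * ι Q u) * (T * T) := by
        rw [hmove, Algebra.left_comm]
        simp only [mul_assoc]
      _ = _ := by
        rw [ι_sq_scalar, ih hl.2, ← map_mul, ← map_mul, List.length_cons, Nat.triangle_succ,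
          List.map_cons, List.prod_cons, pow_add]
        congr 1
        ring

end CliffordAlgebra

/-- The square of an ordered product of pairwise orthogonal vectors in a
Clifford algebra: `(ι(v 0) ⋯ ι(v (n-1)))² = (-1)^(n(n-1)/2) ∏ i, Q (v i)`.
This generalizes the paper's formula `I² = (−1)^{d(d−1)/2} g₁₁ ⋯ g_dd` for the
square of the unit pseudoscalar, and shows a blade squares to a scalar. -/
theorem blade_sq (R M : Type*) [CommRing R] [AddCommGroup M] [Module R M]
    (Q : QuadraticForm R M) (n : ℕ) (v : Fin n → M)
    (horth : ∀ i j : Fin n, i ≠ j → QuadraticMap.polar Q (v i) (v j) = 0) :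
    (List.ofFn fun i => ι Q (v i)).prod * (List.ofFn fun i => ι Q (v i)).prod =
      algebraMap R (CliffordAlgebra Q) ((-1) ^ (n * (n - 1) / 2) * ∏ i, Q (v i)) := by
  have hl : (List.ofFn v).Pairwise fun u w => QuadraticMap.polar Q u w = 0 :=
    List.pairwise_ofFn.mpr fun i j hij => horth i j hij.ne
  simpa [List.map_ofFn, List.prod_ofFn, Function.comp_def] using prod_map_ι_mul_self _ hl
end
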